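/- Let n ≥ 2, let S ⊆ Z^n be an integrally convex set admitting a dec-min element, and Φ_rap(x) = Σ φ(x_i) a rapidly increasing symmetric separable convex function (φ positive, discrete convex, φ(k+1) ≥ n·φ(k)). Then there exists p* ∈ R^n such that decmin(S) = argmin_{x∈S} ⟨p*, x⟩ ∩ argmin(Φ_rap[−p*]), where Φ_rap[−p*](x) = Φ_rap(x) − ⟨p*, x⟩ and the second argmin is over all of Z^n. -/

import Mathlib

open Finset

/-- Descending rearrangement of a tuple. -/
noncomputable def sortDesc {n : ℕ} {α : Type*} [LinearOrder α] (x : Fin n → α) : Fin n → α :=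
  x ∘ (Tuple.sort (fun i => OrderDual.toDual (x i)))

/-- `x <_dec y` : strict lexicographic comparison of descending rearrangements. -/
noncomputable def decLT {n : ℕ} {α : Type*} [LinearOrder α] (x y : Fin n → α) : Prop :=
  ∃ i : Fin n, (∀ j : Fin n, j < i → sortDesc x j = sortDesc y j) ∧ sortDesc x i < sortDesc y i

/-- `x ≤_dec y` : lexicographic comparison of descending rearrangements. -/
noncomputable def decLE {n : ℕ} {α : Type*} [LinearOrder α] (x y : Fin n → α) : Prop :=
  sortDesc x = sortDesc y ∨ decLT x y

/-- `x` is a decreasingly minimal (dec-min) element of `S`. -/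
noncomputable def DecMin {n : ℕ} (S : Set (Fin n → ℤ)) (x : Fin n → ℤ) : Prop :=
  x ∈ S ∧ ∀ y ∈ S, decLE x y

/-- Embedding of integer vectors into real vectors. -/
def castVec {n : ℕ} (z : Fin n → ℤ) : Fin n → ℝ := fun i => (z i : ℝ)

/-- `S ⊆ ℤⁿ` is an integrally convex set: every point of `conv S` lies in the
convex hull of the points of `S` in its integral neighborhood. -/
def IntConvexSet {n : ℕ} (S : Set (Fin n → ℤ)) : Prop :=
  S.Nonempty ∧ ∀ x : Fin n → ℝ,
    x ∈ convexHull ℝ (castVec '' S) →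
    x ∈ convexHull ℝ (castVec '' {z ∈ S | ∀ i, |x i - (z i : ℝ)| < 1})

/-! Because `φ (k + 1) ≥ n * φ k`, one larger entry outweighs all smaller ones, so the dec-min
elements of `S` are exactly the minimizers of `Φ x = ∑ i, φ (x i)` on `S`. Integral convexity
lets the piecewise-linear extension of `Φ` attain its minimum over `conv S` at a point of `S`,
and separating the epigraph of this convex extension from `conv S × (-∞, min Φ]` produces `p`:
a minimizer `w` minimizes `⟨p, ·⟩` on `S` and `Φ - ⟨p, ·⟩` on all of `ℤⁿ`. Since
`Φ = (Φ - ⟨p, ·⟩) + ⟨p, ·⟩`, the points doing both are exactly the minimizers of `Φ` on `S`. -/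

section DecOrder

variable {n : ℕ} {α : Type*} [LinearOrder α]

theorem decLT_iff_toLex_lt {x y : Fin n → α} :
    decLT x y ↔ toLex (sortDesc x) < toLex (sortDesc y) := Iff.rfl

theorem decLE_iff_toLex_le {x y : Fin n → α} :
    decLE x y ↔ toLex (sortDesc x) ≤ toLex (sortDesc y) := by
  rw [le_iff_eq_or_lt, toLex_inj]
  rfl

theorem decLE_or_decLT (x y : Fin n → α) : decLE x y ∨ decLT y x := by
  rw [decLE_iff_toLex_le, decLT_iff_toLex_lt]
  exact le_or_gt _ _

theorem antitone_sortDesc (x : Fin n → α) : Antitone (sortDesc x) :=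
  fun _ _ h => Tuple.monotone_sort (fun i => OrderDual.toDual (x i)) h

theorem sum_comp_sortDesc {M : Type*} [AddCommMonoid M] (f : α → M) (x : Fin n → α) :
    ∑ i, f (sortDesc x i) = ∑ i, f (x i) :=
  Equiv.sum_comp _ (fun i => f (x i))

end DecOrder

section RapidlyIncreasing

variable {α : Type*} [LinearOrder α] {n : ℕ} {φ : α → ℝ}

theorem sum_Ici_lt_sum_Ici_of_rapid (hn : 2 ≤ n) (hpos : ∀ a, 0 < φ a)
    (hrap : ∀ a b, a < b → n * φ a ≤ φ b) {a b : Fin n → α} (ha : Antitone a) {i : Fin n}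
    (hi : a i < b i) : ∑ j ∈ Ici i, φ (a j) < ∑ j ∈ Ici i, φ (b j) := by
  have hφ : Monotone φ := fun a b hab => hab.eq_or_lt.elim (fun h => h ▸ le_rfl) fun h =>
    (le_mul_of_one_le_left (hpos a).le (by norm_cast; omega)).trans (hrap a b h)
  have hsplit : ∑ j ∈ Ici i, φ (b j) = φ (b i) + ∑ j ∈ Ioi i, φ (b j) := by
    rw [← Ioi_insert, sum_insert notMem_Ioi_self]
  have hcard : #(Ici i) = #(Ioi i) + 1 := by
    rw [← Ioi_insert, card_insert_of_notMem notMem_Ioi_self]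
  have hle : ∑ j ∈ Ici i, φ (a j) ≤ #(Ici i) * φ (a i) := by
    simpa using sum_le_card_nsmul _ _ _ fun j hj => hφ (ha (mem_Ici.mp hj))
  have htail : 0 ≤ ∑ j ∈ Ioi i, φ (b j) := sum_nonneg fun j _ => (hpos _).le
  have hbi : n * φ (a i) ≤ φ (b i) := hrap _ _ hi
  rcases ((card_le_univ (Ici i)).trans_eq (Fintype.card_fin n)).lt_or_eq with hlt | heq
  · -- a short tail of `a` is beaten by the single term `φ (b i)`
    have : (#(Ici i) : ℝ) * φ (a i) < n * φ (a i) :=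
      mul_lt_mul_of_pos_right (by exact_mod_cast hlt) (hpos _)
    linarith
  · -- a full tail of `b` has a second positive term
    have hne : (Ioi i).Nonempty := card_pos.mp (by omega)
    have : 0 < ∑ j ∈ Ioi i, φ (b j) := sum_pos (fun j _ => hpos _) hne
    rw [heq] at hle
    linarith

theorem sum_lt_sum_of_decLT (hn : 2 ≤ n) (hpos : ∀ a, 0 < φ a)
    (hrap : ∀ a b, a < b → n * φ a ≤ φ b) {x y : Fin n → α} (h : decLT x y) :
    ∑ i, φ (x i) < ∑ i, φ (y i) := by
  obtain ⟨i, hpre, hi⟩ := h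
  have hIci : univ.filter (fun j => ¬ j < i) = Ici i := by ext; simp
  rw [← sum_comp_sortDesc, ← sum_comp_sortDesc φ y,
    ← sum_filter_add_sum_filter_not univ (· < i), ← sum_filter_add_sum_filter_not univ (· < i),
    hIci, sum_congr rfl fun j hj => congrArg φ (hpre j (mem_filter.mp hj).2)]
  linarith [sum_Ici_lt_sum_Ici_of_rapid hn hpos hrap (antitone_sortDesc x) hi]

theorem sum_le_sum_of_decLE (hn : 2 ≤ n) (hpos : ∀ a, 0 < φ a)
    (hrap : ∀ a b, a < b → n * φ a ≤ φ b) {x y : Fin n → α} (h : decLE x y) :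
    ∑ i, φ (x i) ≤ ∑ i, φ (y i) := by
  rcases h with h | h
  · rw [← sum_comp_sortDesc, ← sum_comp_sortDesc φ y, h]
  · exact (sum_lt_sum_of_decLT hn hpos hrap h).le

end RapidlyIncreasing

theorem decMin_iff_isMinOn {n : ℕ} (hn : 2 ≤ n) {φ : ℤ → ℝ} (hpos : ∀ k, 0 < φ k)
    (hrap : ∀ k l, k < l → n * φ k ≤ φ l) {S : Set (Fin n → ℤ)} {x : Fin n → ℤ} :
    DecMin S x ↔ x ∈ S ∧ IsMinOn (fun z => ∑ i, φ (z i)) S x := by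
  refine ⟨fun ⟨hx, h⟩ => ⟨hx, isMinOn_iff.2 fun y hy => sum_le_sum_of_decLE hn hpos hrap (h y hy)⟩,
    fun ⟨hx, h⟩ => ⟨hx, fun y hy => (decLE_or_decLT x y).resolve_right fun hyx => ?_⟩⟩
  exact (sum_lt_sum_of_decLT hn hpos hrap hyx).not_ge (isMinOn_iff.1 h y hy)

section LinearInterpolation

variable (φ : ℤ → ℝ)

noncomputable def secant (m : ℤ) (x : ℝ) : ℝ := φ m + (x - m) * (φ (m + 1) - φ m)

noncomputable def linearInterp (x : ℝ) : ℝ := secant φ ⌊x⌋ x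

variable {φ}

theorem secant_mul_add_mul (m : ℤ) {a b : ℝ} (hab : a + b = 1) (x y : ℝ) :
    secant φ m (a * x + b * y) = a * secant φ m x + b * secant φ m y := by
  obtain rfl : b = 1 - a := by linarith
  simp only [secant]
  ring

theorem secant_add_one (m : ℤ) (x : ℝ) :
    secant φ m (x + 1) = secant φ m x + (φ (m + 1) - φ m) := by
  simp only [secant]
  ring

theorem secant_intCast_self (m : ℤ) : secant φ m m = φ m := by simp [secant]

theorem secant_intCast_add_one (m : ℤ) : secant φ m (m + 1) = φ (m + 1) := by simp [secant]

theorem linearInterp_intCast (k : ℤ) : linearInterp φ k = φ k := by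
  simp [linearInterp, secant_intCast_self]

theorem secant_floor_intCast_of_abs_sub_lt {x : ℝ} {z : ℤ} (h : |x - z| < 1) :
    secant φ ⌊x⌋ z = φ z := by
  have hlo : ⌊x⌋ ≤ z := Int.floor_le_iff.2 (by linarith [(abs_lt.mp h).2])
  have hhi : z - 1 ≤ ⌊x⌋ := Int.le_floor.2 (by push_cast; linarith [(abs_lt.mp h).1])
  obtain rfl | rfl : z = ⌊x⌋ ∨ z = ⌊x⌋ + 1 := by omega
  · exact secant_intCast_self _
  · exact_mod_cast secant_intCast_add_one _

theorem secant_intCast_le (hφ : Monotone fun k => φ (k + 1) - φ k) (m k : ℤ) :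
    secant φ m k ≤ φ k := by
  rcases le_total m k with h | h
  · induction k, h using Int.leInduction with
    | base => rw [secant_intCast_self]
    | succ k hk ih =>
      rw [Int.cast_add, Int.cast_one, secant_add_one]
      linarith [hφ hk]
  · induction k, h using Int.leInductionDown with
    | base => rw [secant_intCast_self]
    | pred k hk ih =>
      have := secant_add_one (φ := φ) m ((k - 1 : ℤ) : ℝ)
      have := hφ (show k - 1 ≤ m by omega)
      simp only [Int.cast_sub, Int.cast_one, sub_add_cancel] at *
      linarith

theorem secant_le_linearInterp (hφ : Monotone fun k => φ (k + 1) - φ k) (m : ℤ) (x : ℝ) :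
    secant φ m x ≤ linearInterp φ x := by
  set k := ⌊x⌋
  set θ := x - k with hθx
  have hθ : 0 ≤ θ ∧ θ ≤ 1 := ⟨by linarith [Int.floor_le x], by linarith [Int.lt_floor_add_one x]⟩
  have hx : ∀ l, secant φ l x = (1 - θ) * secant φ l k + θ * secant φ l (k + 1) := fun l => by
    rw [← secant_mul_add_mul _ (by ring), hθx]
    ring_nf
  have hk := secant_intCast_le hφ m k
  have hk1 := secant_intCast_le hφ m (k + 1)
  push_cast at hk1
  rw [linearInterp, hx, hx, secant_intCast_self, secant_intCast_add_one]
  nlinarith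

theorem convexOn_linearInterp (hφ : Monotone fun k => φ (k + 1) - φ k) :
    ConvexOn ℝ Set.univ (linearInterp φ) := by
  refine ⟨convex_univ, fun x _ y _ a b ha hb hab => ?_⟩
  simp only [smul_eq_mul]
  calc linearInterp φ (a * x + b * y)
      = a * secant φ ⌊a * x + b * y⌋ x + b * secant φ ⌊a * x + b * y⌋ y :=
        secant_mul_add_mul _ hab x y
    _ ≤ a * linearInterp φ x + b * linearInterp φ y := by
        gcongr <;> exact secant_le_linearInterp hφ _ _

end LinearInterpolation

theorem ConvexOn.sum_comp_apply {ι : Type*} [Fintype ι] {h : ℝ → ℝ}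
    (hh : ConvexOn ℝ Set.univ h) :
    ConvexOn ℝ Set.univ fun v : ι → ℝ => ∑ i, h (v i) := by
  have := Finset.sum_induction (fun i (v : ι → ℝ) => h (v i)) (ConvexOn ℝ Set.univ)
    (fun _ _ => ConvexOn.add) (convexOn_const 0 convex_univ) (s := univ)
    (fun i _ => hh.comp_linearMap (LinearMap.proj (R := ℝ) (φ := fun _ : ι => ℝ) i))
  simpa only [Finset.sum_fn] using this

/-- At `x` the extension agrees with the affine function `∑ i, secant φ ⌊x i⌋`, which is exact
on the integral neighbourhood of `x`. -/
theorem le_sum_linearInterp_of_mem_convexHull {n : ℕ} {S : Set (Fin n → ℤ)}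
    (hS : IntConvexSet S) {φ : ℤ → ℝ} {c : ℝ} (hc : ∀ z ∈ S, c ≤ ∑ i, φ (z i)) {x : Fin n → ℝ}
    (hx : x ∈ convexHull ℝ (castVec '' S)) : c ≤ ∑ i, linearInterp φ (x i) := by
  set A : (Fin n → ℝ) → ℝ := fun v => ∑ i, secant φ ⌊x i⌋ (v i)
  have hconv : Convex ℝ {v | c ≤ A v} := by
    intro v hv u hu a b ha hb hab
    simp only [Set.mem_ofPred_eq, A, Pi.add_apply, Pi.smul_apply, smul_eq_mul,
      secant_mul_add_mul _ hab, sum_add_distrib, ← mul_sum] at hv hu ⊢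
    have : a * c + b * c = c := by rw [← add_mul, hab, one_mul]
    nlinarith [mul_le_mul_of_nonneg_left hv ha, mul_le_mul_of_nonneg_left hu hb]
  have hnear : castVec '' {z ∈ S | ∀ i, |x i - (z i : ℝ)| < 1} ⊆ {v | c ≤ A v} := by
    rintro _ ⟨z, ⟨hzS, hz⟩, rfl⟩
    simpa only [Set.mem_ofPred_eq, A, castVec, secant_floor_intCast_of_abs_sub_lt (hz _)]
      using hc z hzS
  exact convexHull_min hnear hconv (hS.2 x hx)

/-- `g` is a subgradient of `f` at `w` in the normal cone of `C`, obtained by separating the strict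
epigraph of `f` from `C ×ˢ Iic (f w)`. -/
theorem ConvexOn.exists_clm_isMinOn_of_isMinOn {E : Type*} [TopologicalSpace E] [AddCommGroup E]
    [Module ℝ E] [IsTopologicalAddGroup E] [ContinuousSMul ℝ E] {f : E → ℝ}
    (hf : ConvexOn ℝ Set.univ f) (hfc : Continuous f) {C : Set E} (hC : Convex ℝ C) {w : E}
    (hw : w ∈ C) (hmin : IsMinOn f C w) :
    ∃ g : StrongDual ℝ E, IsMinOn g C w ∧ IsMinOn (fun v => f v - g v) Set.univ w := by
  have hopen : IsOpen {p : E × ℝ | p.1 ∈ Set.univ ∧ f p.1 < p.2} := by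
    simpa using isOpen_lt (hfc.comp continuous_fst) continuous_snd
  have hdisj : Disjoint {p : E × ℝ | p.1 ∈ Set.univ ∧ f p.1 < p.2} (C ×ˢ Set.Iic (f w)) :=
    Set.disjoint_left.2 fun ⟨v, t⟩ ⟨_, hvt⟩ ⟨hv, ht⟩ =>
      (ht.trans (isMinOn_iff.1 hmin v hv)).not_gt hvt
  obtain ⟨F, u, hlt, hge⟩ := geometric_hahn_banach_open hf.convex_strict_epigraph hopen
    (hC.prod (convex_Iic _)) hdisj
  set ℓ : StrongDual ℝ E := F.comp (ContinuousLinearMap.inl ℝ E ℝ)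
  set c := F (0, 1)
  have hF : ∀ v t, F (v, t) = ℓ v + t * c := fun v t => by
    rw [← smul_eq_mul, ← map_smul, ContinuousLinearMap.comp_apply,
      ContinuousLinearMap.inl_apply, ← map_add, Prod.smul_mk, smul_zero, smul_eq_mul, mul_one,
      Prod.mk_add_mk, add_zero, zero_add]
  have hepi : ∀ v t, f v < t → ℓ v + t * c < u := fun v t h => hF v t ▸ hlt (v, t) ⟨trivial, h⟩
  have hC' : ∀ y ∈ C, u ≤ ℓ y + f w * c := fun y hy =>
    hF y _ ▸ hge (y, f w) ⟨hy, Set.mem_Iic.2 le_rfl⟩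
  have hc : 0 < -c := by linarith [hepi w (f w + 1) (lt_add_one _), hC' w hw]
  -- `ℓ v + f v * c ≤ u` is the limit of the strict inequalities at heights above `f v`
  have hgraph : ∀ v, ℓ v + f v * c ≤ u := fun v => le_of_forall_pos_lt_add fun ε hε => by
    have := hepi v (f v + ε / -c) (lt_add_of_pos_right _ (div_pos hε hc))
    have hε' : (f v + ε / -c) * c = f v * c - ε := by
      field_simp [(neg_pos.1 hc).ne]
      ring
    linarith
  refine ⟨(-c)⁻¹ • ℓ, isMinOn_iff.2 fun y hy => ?_, isMinOn_iff.2 fun v _ => ?_⟩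
  · have : ℓ w ≤ ℓ y := by linarith [hgraph w, hC' y hy]
    simpa using mul_le_mul_of_nonneg_left this (inv_nonneg.2 hc.le)
  · have hℓ : ∀ x, ((-c)⁻¹ • ℓ) x * -c = ℓ x := fun x => by
      rw [smul_apply, smul_eq_mul, mul_comm, ← mul_assoc, mul_inv_cancel₀ hc.ne', one_mul]
    refine le_of_mul_le_mul_right ?_ hc
    rw [sub_mul, sub_mul, hℓ, hℓ]
    nlinarith [hgraph v, hC' w hw]

theorem exists_dual_vector_of_isMinOn {n : ℕ} {S : Set (Fin n → ℤ)} (hS : IntConvexSet S)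
    {φ : ℤ → ℝ} (hφ : Monotone fun k => φ (k + 1) - φ k) {w : Fin n → ℤ} (hw : w ∈ S)
    (hmin : IsMinOn (fun z => ∑ i, φ (z i)) S w) :
    ∃ p : Fin n → ℝ, IsMinOn (fun z : Fin n → ℤ => ∑ i, p i * (z i : ℝ)) S w ∧
      IsMinOn (fun z : Fin n → ℤ => ∑ i, φ (z i) - ∑ i, p i * (z i : ℝ)) Set.univ w := by
  set F : (Fin n → ℝ) → ℝ := fun v => ∑ i, linearInterp φ (v i)
  have hFconv : ConvexOn ℝ Set.univ F := (convexOn_linearInterp hφ).sum_comp_apply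
  have hFint : ∀ z, F (castVec z) = ∑ i, φ (z i) := fun z => by
    simp only [F, castVec, linearInterp_intCast]
  have hFmin : IsMinOn F (convexHull ℝ (castVec '' S)) (castVec w) := isMinOn_iff.2 fun v hv =>
    hFint w ▸ le_sum_linearInterp_of_mem_convexHull hS (fun z hz => isMinOn_iff.1 hmin z hz) hv
  obtain ⟨g, hgC, hgF⟩ := hFconv.exists_clm_isMinOn_of_isMinOn
    (continuousOn_univ.1 (hFconv.continuousOn isOpen_univ)) (convex_convexHull ℝ _)
    (subset_convexHull ℝ _ (Set.mem_image_of_mem _ hw)) hFmin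
  set p : Fin n → ℝ := fun i => g (Pi.single i 1)
  have hg : ∀ z : Fin n → ℤ, g (castVec z) = ∑ i, p i * (z i : ℝ) := fun z => by
    rw [pi_eq_sum_univ' (castVec z), map_sum]
    exact sum_congr rfl fun i _ => by rw [map_smul, smul_eq_mul, mul_comm]; rfl
  refine ⟨p, isMinOn_iff.2 fun y hy => ?_, isMinOn_iff.2 fun y _ => ?_⟩
  · simpa only [hg] using isMinOn_iff.1 hgC _ (subset_convexHull ℝ _ (Set.mem_image_of_mem _ hy))
  · simpa only [hg, hFint] using isMinOn_iff.1 hgF (castVec y) trivial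

theorem setOf_isMinOn_eq_inter_of_isMinOn_sub {α : Type*} {f g : α → ℝ} {S : Set α} {w : α}
    (hw : w ∈ S) (hg : IsMinOn g S w) (hfg : IsMinOn (fun x => f x - g x) Set.univ w) :
    {x | x ∈ S ∧ IsMinOn f S x} =
      {x ∈ S | IsMinOn g S x} ∩ {x | IsMinOn (fun x => f x - g x) Set.univ x} := by
  simp only [isMinOn_iff, Set.mem_univ, true_implies] at *
  ext x
  constructor
  · rintro ⟨hx, hfx⟩
    exact ⟨⟨hx, fun y hy => by linarith [hg x hx, hfg x, hfx w hw, hg y hy]⟩,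
      fun y => by linarith [hg x hx, hfg x, hfx w hw, hfg y]⟩
  · rintro ⟨⟨hx, hgx⟩, hfgx⟩
    exact ⟨hx, fun y hy => by linarith [hgx y hy, hfgx y]⟩

theorem decmin_fenchel_decomposition (n : ℕ) (hn : 2 ≤ n) (S : Set (Fin n → ℤ))
    (hS : IntConvexSet S) (hdm : ∃ w, DecMin S w)
    (φ : ℤ → ℝ)
    (hpos : ∀ k : ℤ, 0 < φ k)
    (hconv : ∀ k : ℤ, 2 * φ k ≤ φ (k - 1) + φ (k + 1))
    (hrap : ∀ k : ℤ, (n : ℝ) * φ k ≤ φ (k + 1)) :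
    ∃ p : Fin n → ℝ,
      {x | DecMin S x} =
        {x ∈ S | ∀ y ∈ S, ∑ i, p i * (x i : ℝ) ≤ ∑ i, p i * (y i : ℝ)} ∩
        {x : Fin n → ℤ | ∀ y : Fin n → ℤ,
          (∑ i, φ (x i)) - ∑ i, p i * (x i : ℝ) ≤ (∑ i, φ (y i)) - ∑ i, p i * (y i : ℝ)} := by
  have hmono : Monotone φ := monotone_int_of_le_succ fun k =>
    (le_mul_of_one_le_left (hpos k).le (by norm_cast; omega)).trans (hrap k)
  have hrap' : ∀ k l, k < l → n * φ k ≤ φ l := fun k l h => (hrap k).trans (hmono h)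
  have hslope : Monotone fun k => φ (k + 1) - φ k := monotone_int_of_le_succ fun k => by
    have := hconv (k + 1)
    rw [add_sub_cancel_right] at this
    linarith
  have hdec : ∀ x, DecMin S x ↔ x ∈ S ∧ IsMinOn (fun z => ∑ i, φ (z i)) S x :=
    fun x => decMin_iff_isMinOn hn hpos hrap'
  obtain ⟨w, hw⟩ := hdm
  obtain ⟨hwS, hwmin⟩ := (hdec w).1 hw
  obtain ⟨p, hpS, hpΦ⟩ := exists_dual_vector_of_isMinOn hS hslope hwS hwmin
  refine ⟨p, ?_⟩
  simp only [hdec]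
  simpa only [isMinOn_iff, Set.mem_univ, true_implies]
    using setOf_isMinOn_eq_inter_of_isMinOn_sub hwS hpS hpΦ
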